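/- Positivity of bounded mass-action solutions (from the proof of Lemma 2.1): Let c : [0,T] → ℝ^d_{≥0} be a differentiable solution of the mass-action ODE c'(t) = Σ_k κ_k c(t)^{y_k} ζ_k with c(0) ∈ ℝ^d_{>0}, and suppose there is m > 0 such that ‖c(s)‖₁ ≤ m for all s ∈ [0,T]. Then c_i(t) > 0 for every i ∈ {1,…,d} and every t ∈ [0,T]. -/
import Mathlib


open Finset

/-- Monomial `u^v = ∏ i, u i ^ v i` (with the convention `0^0 = 1`). -/
noncomputable def monPow {d : ℕ} (u : Fin d → ℝ) (v : Fin d → ℕ) : ℝ :=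
  ∏ i, u i ^ v i

/-- The reaction vector `ζ = y' - y`, viewed as a real vector. -/
def zetaVec {d : ℕ} (y y' : Fin d → ℕ) : Fin d → ℝ :=
  fun i => (y' i : ℝ) - (y i : ℝ)

/-- Stochastic mass action intensity `λ_k(x) = κ_k ∏_i x_i!/(x_i - y_{ki})!`,
taken to be `0` when `x` is not componentwise at least `y_k`. -/
noncomputable def intensity {d : ℕ} (κk : ℝ) (yk : Fin d → ℕ) (x : Fin d → ℕ) : ℝ :=
  κk * ∏ i, ((x i).descFactorial (yk i) : ℝ)

/-- Right-hand side of the deterministic mass-action ODE: `Σ_k κ_k c^{y_k} ζ_k`. -/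
noncomputable def massActionRHS {d K : ℕ} (κ : Fin K → ℝ) (y y' : Fin K → Fin d → ℕ)
    (c : Fin d → ℝ) : Fin d → ℝ :=
  ∑ k, (κ k * monPow c (y k)) • zetaVec (y k) (y' k)

/-- `c` is differentiable on `[0,∞)` and solves the mass-action ODE there. -/
def solvesMassAction {d K : ℕ} (κ : Fin K → ℝ) (y y' : Fin K → Fin d → ℕ)
    (c : ℝ → Fin d → ℝ) : Prop :=
  ∀ t ≥ (0:ℝ), HasDerivWithinAt c (massActionRHS κ y y' (c t)) (Set.Ici 0) t

/-- The dynamical and restricted (DR) complex balance condition: for every complex `z`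
with `‖z‖₁ ≥ 2` and every `t ≥ 0`,
`Σ_{k : y_k = z} κ_k c(t)^z = Σ_{k : y'_k = z} κ_k c(t)^{y_k}`. -/
def DRcondition {d K : ℕ} (κ : Fin K → ℝ) (y y' : Fin K → Fin d → ℕ)
    (c : ℝ → Fin d → ℝ) : Prop :=
  ∀ z : Fin d → ℕ, 2 ≤ ∑ i, z i → ∀ t ≥ (0:ℝ),
    ∑ k ∈ univ.filter (fun k => y k = z), κ k * monPow (c t) z
      = ∑ k ∈ univ.filter (fun k => y' k = z), κ k * monPow (c t) (y k)

/-- `P` solves the chemical master equation on `[0,∞)`: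
`∂ₜ P(x,t) = Σ_k λ_k(x-ζ_k) P(x-ζ_k,t) 1{x-ζ_k ≥ 0} - Σ_k λ_k(x) P(x,t)`. -/
def solvesCME {d K : ℕ} (κ : Fin K → ℝ) (y y' : Fin K → Fin d → ℕ)
    (P : (Fin d → ℕ) → ℝ → ℝ) : Prop :=
  ∀ x : Fin d → ℕ, ∀ t ≥ (0:ℝ),
    HasDerivWithinAt (P x)
      ((∑ k, if ∀ i, y' k i ≤ x i + y k i then
          intensity (κ k) (y k) (fun i => x i + y k i - y' k i)
            * P (fun i => x i + y k i - y' k i) t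
        else 0)
       - ∑ k, intensity (κ k) (y k) x * P x t)
      (Set.Ici 0) t

/-- The product-Poisson probability mass function `∏_i e^{-c_i} c_i^{x_i}/x_i!`. -/
noncomputable def productPoisson {d : ℕ} (c : Fin d → ℝ) (x : Fin d → ℕ) : ℝ :=
  ∏ i, Real.exp (-(c i)) * (c i) ^ (x i) / (x i).factorial


lemma monPow_nonneg' {d : ℕ} {u : Fin d → ℝ} (h : ∀ j, 0 ≤ u j) (v : Fin d → ℕ) :
    0 ≤ monPow u v :=
  Finset.prod_nonneg fun j _ => pow_nonneg (h j) _

lemma monPow_le' {d : ℕ} {u : Fin d → ℝ} {v : Fin d → ℕ} {i : Fin d} (hv : 1 ≤ v i)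
    {B : ℝ} (hB : 1 ≤ B) (h0 : ∀ j, 0 ≤ u j) (hu : ∀ j, u j ≤ B) :
    monPow u v ≤ u i * B ^ (∑ j, v j) := by
  have hB0 : (0:ℝ) ≤ B := le_trans zero_le_one hB
  have hsplit : monPow u v = u i ^ v i * ∏ j ∈ univ.erase i, u j ^ v j :=
    (Finset.mul_prod_erase univ _ (mem_univ i)).symm
  have hpow : u i ^ v i = u i * u i ^ (v i - 1) := by
    conv_lhs => rw [show v i = (v i - 1) + 1 by omega]
    rw [pow_succ]; ring
  have hprod : ∏ j ∈ univ.erase i, u j ^ v j ≤ B ^ (∑ j ∈ univ.erase i, v j) := by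
    rw [← Finset.prod_pow_eq_pow_sum]
    exact Finset.prod_le_prod (fun j _ => pow_nonneg (h0 j) _)
      (fun j _ => pow_le_pow_left₀ (h0 j) (hu j) _)
  have h1 : u i ^ (v i - 1) ≤ B ^ (v i - 1) := pow_le_pow_left₀ (h0 i) (hu i) _
  have hle : (v i - 1) + ∑ j ∈ univ.erase i, v j ≤ ∑ j, v j := by
    have : ∑ j, v j = v i + ∑ j ∈ univ.erase i, v j :=
      (Finset.add_sum_erase univ _ (mem_univ i)).symm
    omega
  calc monPow u v = u i * (u i ^ (v i - 1) * ∏ j ∈ univ.erase i, u j ^ v j) := by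
        rw [hsplit, hpow]; ring
    _ ≤ u i * (B ^ (v i - 1) * B ^ (∑ j ∈ univ.erase i, v j)) := by
        apply mul_le_mul_of_nonneg_left _ (h0 i)
        exact mul_le_mul h1 hprod (Finset.prod_nonneg fun j _ => pow_nonneg (h0 j) _)
          (pow_nonneg hB0 _)
    _ = u i * B ^ ((v i - 1) + ∑ j ∈ univ.erase i, v j) := by rw [pow_add]
    _ ≤ u i * B ^ (∑ j, v j) := by
        apply mul_le_mul_of_nonneg_left _ (h0 i)
        exact pow_le_pow_right₀ hB hle

/-- Positivity of bounded mass-action solutions (from the proof of Lemma 2.1): a nonnegative,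
bounded, differentiable solution of the mass-action ODE on `[0,T]` with strictly positive
initial condition stays strictly positive on `[0,T]`. -/
theorem bounded_massAction_solution_positive
    {d K : ℕ} (κ : Fin K → ℝ) (y y' : Fin K → Fin d → ℕ)
    (hκ : ∀ k, 0 ≤ κ k) (hyy' : ∀ k, y' k ≠ y k)
    (T : ℝ) (hT : 0 ≤ T)
    (c : ℝ → Fin d → ℝ)
    (hODE : ∀ t ∈ Set.Icc (0:ℝ) T,
      HasDerivWithinAt c (massActionRHS κ y y' (c t)) (Set.Icc 0 T) t)
    (hnonneg : ∀ t ∈ Set.Icc (0:ℝ) T, ∀ i, 0 ≤ c t i)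
    (hc0 : ∀ i, 0 < c 0 i)
    (m : ℝ) (hm : 0 < m)
    (hbound : ∀ s ∈ Set.Icc (0:ℝ) T, ∑ i, |c s i| ≤ m) :
    ∀ t ∈ Set.Icc (0:ℝ) T, ∀ i, 0 < c t i := by
  intro t ht i
  have hcm : ∀ s ∈ Set.Icc (0:ℝ) T, ∀ j, c s j ≤ 1 + m := by
    intro s hs j
    have h1 : |c s j| ≤ ∑ i, |c s i| :=
      Finset.single_le_sum (f := fun i => |c s i|) (fun i _ => abs_nonneg _) (mem_univ j)
    have h2 := hbound s hs
    have h3 := le_abs_self (c s j)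
    linarith
  set M : ℝ := ∑ k, κ k * (((y k i : ℝ) + (y' k i)) * (1 + m) ^ (∑ j, y k j)) with hM
  have hRHS : ∀ s ∈ Set.Icc (0:ℝ) T, -(M * c s i) ≤ massActionRHS κ y y' (c s) i := by
    intro s hs
    have h0 : ∀ j, 0 ≤ c s j := hnonneg s hs
    have hci : 0 ≤ c s i := h0 i
    have hRHSi : massActionRHS κ y y' (c s) i
        = ∑ k, κ k * monPow (c s) (y k) * ((y' k i : ℝ) - (y k i)) := by
      simp [massActionRHS, zetaVec, Finset.sum_apply, mul_assoc]
    rw [hRHSi, hM, Finset.sum_mul, ← Finset.sum_neg_distrib]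
    apply Finset.sum_le_sum
    intro k _
    have hκk := hκ k
    have hP : 0 ≤ monPow (c s) (y k) := monPow_nonneg' h0 _
    have hBpos : (0:ℝ) ≤ (1 + m) ^ (∑ j, y k j) := by positivity
    have ha : (0:ℝ) ≤ (y k i : ℝ) + (y' k i) := by positivity
    by_cases hk : y k i = 0
    · have hz : (0:ℝ) ≤ (y' k i : ℝ) - (y k i) := by
        rw [hk]; simp
      have hterm : 0 ≤ κ k * monPow (c s) (y k) * ((y' k i : ℝ) - (y k i)) :=
        mul_nonneg (mul_nonneg hκk hP) hz
      have hlhs : 0 ≤ κ k * (((y k i : ℝ) + (y' k i)) * (1 + m) ^ (∑ j, y k j)) * c s i := by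
        positivity
      linarith
    · have hk1 : 1 ≤ y k i := Nat.one_le_iff_ne_zero.mpr hk
      have hmon : monPow (c s) (y k) ≤ c s i * (1 + m) ^ (∑ j, y k j) :=
        monPow_le' hk1 (by linarith) h0 (hcm s hs)
      have hζ : -((y k i : ℝ) + (y' k i)) ≤ (y' k i : ℝ) - (y k i) := by
        have : (0:ℝ) ≤ (y' k i : ℝ) := Nat.cast_nonneg _
        linarith
      have h5 : κ k * monPow (c s) (y k) * (-((y k i : ℝ) + (y' k i)))
          ≤ κ k * monPow (c s) (y k) * ((y' k i : ℝ) - (y k i)) :=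
        mul_le_mul_of_nonneg_left hζ (mul_nonneg hκk hP)
      have h6 : ((y k i : ℝ) + (y' k i)) * (κ k * monPow (c s) (y k))
          ≤ ((y k i : ℝ) + (y' k i)) * (κ k * (c s i * (1 + m) ^ (∑ j, y k j))) :=
        mul_le_mul_of_nonneg_left (mul_le_mul_of_nonneg_left hmon hκk) ha
      nlinarith [h5, h6]
  have hcont_i : ContinuousOn (fun s => c s i) (Set.Icc (0:ℝ) T) := by
    intro s hs
    exact ((ContinuousLinearMap.proj i : (Fin d → ℝ) →L[ℝ] ℝ).hasFDerivAt.comp_hasDerivWithinAt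
      s (hODE s hs)).continuousWithinAt
  set g : ℝ → ℝ := fun s => Real.exp (M * s) * c s i with hgdef
  have hgcont : ContinuousOn g (Set.Icc (0:ℝ) T) :=
    ((Real.continuous_exp.comp (continuous_const.mul continuous_id)).continuousOn).mul hcont_i
  set f' : ℝ → ℝ := fun s => Real.exp (M * s) * (M * 1) * c s i
      + Real.exp (M * s) * massActionRHS κ y y' (c s) i with hf'def
  have hgderiv : ∀ s ∈ interior (Set.Icc (0:ℝ) T),
      HasDerivWithinAt g (f' s) (interior (Set.Icc (0:ℝ) T)) s := by
    intro s hs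
    have hsmem : s ∈ Set.Icc (0:ℝ) T := interior_subset hs
    have h1 : HasDerivAt (fun u : ℝ => Real.exp (M * u)) (Real.exp (M * s) * (M * 1)) s :=
      ((hasDerivAt_id s).const_mul M).exp
    have h2 : HasDerivWithinAt (fun u => c u i) (massActionRHS κ y y' (c s) i)
        (Set.Icc (0:ℝ) T) s :=
      (ContinuousLinearMap.proj i : (Fin d → ℝ) →L[ℝ] ℝ).hasFDerivAt.comp_hasDerivWithinAt
        s (hODE s hsmem)
    exact ((h1.hasDerivWithinAt.mul h2).mono interior_subset)
  have hgpos : ∀ s ∈ interior (Set.Icc (0:ℝ) T), 0 ≤ f' s := by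
    intro s hs
    have hsmem : s ∈ Set.Icc (0:ℝ) T := interior_subset hs
    have h4 := hRHS s hsmem
    have h5 := mul_le_mul_of_nonneg_left h4 (Real.exp_pos (M * s)).le
    simp only [hf'def]
    nlinarith [h5]
  have hmono : MonotoneOn g (Set.Icc (0:ℝ) T) :=
    monotoneOn_of_hasDerivWithinAt_nonneg (convex_Icc 0 T) hgcont hgderiv hgpos
  have h0mem : (0:ℝ) ∈ Set.Icc (0:ℝ) T := ⟨le_refl 0, hT⟩
  have hle : g 0 ≤ g t := hmono h0mem ht ht.1
  have hg0 : g 0 = c 0 i := by simp [hgdef]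
  have hgt : g t = Real.exp (M * t) * c t i := rfl
  have hexp := Real.exp_pos (M * t)
  have hc0i := hc0 i
  have hcti := hnonneg t ht i
  nlinarith [hle, hexp, hc0i, hcti, hg0, hgt]
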